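/- Let M > 0 and Λ > 0 with 9ΛM² < 1, and write S := √(1 − 9ΛM²). Define r_poly(a) := 3M − (2/√3)·S·a − (3ΛM + 2/(9M))·a², β_poly(a) := 3√3·M/S − ((2 + 9ΛM²)/S²)·a + (√3·(45ΛM² − 1)/(6·M·S³))·a², Δ_r(r, a) := (r² + a²)(1 − Λr²/3) − 2Mr, and T(r, β, a) := (r² + a²)·((r² + a²) − aβ)/(Δ_r(r, a)·r²) + a·(β − a)/r². Then, as a → 0, T(r_poly(a), β_poly(a), a) − (3/S² + (√3·(2 − 45ΛM²)/(3·M·S³))·a + ((810Λ²M⁴ − 135ΛM² + 8)/(9·M²·S⁴))·a²) = O(a³). -/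
import Mathlib

open Asymptotics

set_option maxHeartbeats 4000000

/-- `S = √(1 - 9ΛM²)`. -/
noncomputable def S (M Λ : ℝ) : ℝ := Real.sqrt (1 - 9 * Λ * M ^ 2)

/-- Quadratic truncation of the co-rotating photon-orbit radius:
`r_poly(a) = 3M - (2/√3)·S·a - (3ΛM + 2/(9M))·a²`. -/
noncomputable def rpoly (M Λ a : ℝ) : ℝ :=
  3 * M - (2 / Real.sqrt 3) * S M Λ * a - (3 * Λ * M + 2 / (9 * M)) * a ^ 2

/-- Quadratic truncation of the Ξ-corrected impact parameter `Ξ(a)b₊(a)`: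
`β_poly(a) = 3√3·M/S - ((2 + 9ΛM²)/S²)·a + (√3·(45ΛM² - 1)/(6MS³))·a²`. -/
noncomputable def βpoly (M Λ a : ℝ) : ℝ :=
  3 * Real.sqrt 3 * M / S M Λ - ((2 + 9 * Λ * M ^ 2) / (S M Λ) ^ 2) * a +
    (Real.sqrt 3 * (45 * Λ * M ^ 2 - 1) / (6 * M * (S M Λ) ^ 3)) * a ^ 2

/-- Kerr–de Sitter horizon function `Δ_r(r, a) = (r² + a²)(1 - Λr²/3) - 2Mr`. -/
noncomputable def Δr (M Λ r a : ℝ) : ℝ :=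
  (r ^ 2 + a ^ 2) * (1 - Λ * r ^ 2 / 3) - 2 * M * r

/-- Coordinate-time velocity of an equatorial null geodesic:
`T(r, β, a) = (r² + a²)·((r² + a²) - aβ)/(Δ_r(r, a)·r²) + a·(β - a)/r²`. -/
noncomputable def Tdot (M Λ r β a : ℝ) : ℝ :=
  (r ^ 2 + a ^ 2) * ((r ^ 2 + a ^ 2) - a * β) / (Δr M Λ r a * r ^ 2) +
    a * (β - a) / r ^ 2

noncomputable def Rp (M Λ a s t : ℝ) : ℝ :=
  27 * M ^ 2 * t - 18 * M * s * a - (27 * Λ * M ^ 2 + 2) * t * a ^ 2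

noncomputable def Bp (M Λ a s t : ℝ) : ℝ :=
  18 * M ^ 2 * s ^ 2 * t - 6 * M * (2 + 9 * Λ * M ^ 2) * s * a + (45 * Λ * M ^ 2 - 1) * t * a ^ 2

noncomputable def Up (M Λ a s t : ℝ) : ℝ :=
  (Rp M Λ a s t) ^ 2 + 81 * M ^ 2 * t ^ 2 * a ^ 2

noncomputable def Dp (M Λ a s t : ℝ) : ℝ :=
  Up M Λ a s t * (243 * M ^ 2 * t ^ 2 - Λ * (Rp M Λ a s t) ^ 2) - 4374 * M ^ 4 * t ^ 3 * Rp M Λ a s t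

noncomputable def Pp (M Λ a s t : ℝ) : ℝ :=
  27 * M ^ 2 * s ^ 2 + 3 * M * s * t * (2 - 45 * Λ * M ^ 2) * a +
    (810 * Λ ^ 2 * M ^ 4 - 135 * Λ * M ^ 2 + 8) * a ^ 2

noncomputable def Qpc0 (M Λ a s t : ℝ) : ℝ := (27648 : ℝ) * Λ * a^11 + (518400 : ℝ) * M * Λ * a^10 * s * t + (-1679616 : ℝ) * M^2 * a^7 + (10730880 : ℝ) * M^2 * Λ * a^9 + (1772928 : ℝ) * M^2 * Λ^2 * a^11 + (-21415104 : ℝ) * M^3 * a^6 * s * t + (26838864 : ℝ) * M^3 * Λ * a^8 * s * t + (26407296 : ℝ) * M^3 * Λ^2 * a^10 * s * t + (-279656064 : ℝ) * M^4 * a^5 + (-150535584 : ℝ) * M^4 * Λ * a^7 + (269368416 : ℝ) * M^4 * Λ^2 * a^9 + (40590720 : ℝ) * M^4 * Λ^3 * a^11 + (-286269552 : ℝ) * M^5 * a^4 * s * t + (-1180743804 : ℝ) * M^5 * Λ * a^6 * s * t + (-207537552 : ℝ) * M^5 * Λ^2 * a^8 * s * t + (409406400 : ℝ) * M^5 * Λ^3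 * a^10 * s * t + (2984572656 : ℝ) * M^6 * a^3 + (548447112 : ℝ) * M^6 * Λ * a^5 + (-10033606080 : ℝ) * M^6 * Λ^2 * a^7 + (-2091751776 : ℝ) * M^6 * Λ^3 * a^9

noncomputable def Qpc1 (M Λ a s t : ℝ) : ℝ := (311778720 : ℝ) * M^6 * Λ^4 * a^11 + (3922034580 : ℝ) * M^7 * a^2 * s * t + (21721056552 : ℝ) * M^7 * Λ * a^4 * s * t + (599465448 : ℝ) * M^7 * Λ^2 * a^6 * s * t + (-22934159208 : ℝ) * M^7 * Λ^3 * a^8 * s * t + (85030560 : ℝ) * M^7 * Λ^4 * a^10 * s * t + (-21523360500 : ℝ) * M^8 * a + (-3845507076 : ℝ) * M^8 * Λ * a^3 + (247279497300 : ℝ) * M^8 * Λ^2 * a^5 + (28774341504 : ℝ) * M^8 * Λ^3 * a^7 + (-86195478672 : ℝ) * M^8 * Λ^4 * a^9 + (-1530550080 : ℝ) * M^8 * Λ^5 * a^11 + (6457008150 : ℝ) * M^9 * s * t + (-213038222229 : ℝ) * M^9 * Λ * a^2 * s * t + (-68042516994 : ℝ) * M^9 * Λ^2 * a^4 * s * t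 + (577806570045 : ℝ) * M^9 * Λ^3 * a^6 * s * t + (-101194869456 : ℝ) * M^9 * Λ^4 * a^8 * s * t + (-44768589840 : ℝ) * M^9 * Λ^5 * a^10 * s * t + (717502745628 : ℝ) * M^10 * Λ * a + (-2594684154996 : ℝ) * M^10 * Λ^2 * a^3

noncomputable def Qpc2 (M Λ a s t : ℝ) : ℝ := (-1688464584504 : ℝ) * M^10 * Λ^3 * a^5 + (2931194721960 : ℝ) * M^10 * Λ^4 * a^7 + (-62331652008 : ℝ) * M^10 * Λ^5 * a^9 + (-20318052312 : ℝ) * M^10 * Λ^6 * a^11 + (-166203389781 : ℝ) * M^11 * Λ * s * t + (3660736200561 : ℝ) * M^11 * Λ^2 * a^2 * s * t + (-6830998062048 : ℝ) * M^11 * Λ^3 * a^4 * s * t + (-251952458013 : ℝ) * M^11 * Λ^4 * a^6 * s * t + (2502090658125 : ℝ) * M^11 * Λ^5 * a^8 * s * t + (-108477736920 : ℝ) * M^11 * Λ^6 * a^10 * s * t + (-8326441149588 : ℝ) * M^12 * Λ^2 * a + (46102263350022 : ℝ) * M^12 * Λ^3 * a^3 + (-40334347109790 : ℝ) * M^12 *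 Λ^4 * a^5 + (-8085465605430 : ℝ) * M^12 * Λ^5 * a^7 + (7106066609238 : ℝ) * M^12 * Λ^6 * a^9 + (306837027288 : ℝ) * M^12 * Λ^7 * a^11 + (1014654260691 : ℝ) * M^13 * Λ^2 * s * t + (-21869111763072 : ℝ) * M^13 * Λ^3 * a^2 * s * t + (70093664551836 : ℝ) * M^13 * Λ^4 * a^4 * s * t + (-56258104048668 : ℝ) * M^13 * Λ^5 * a^6 * s * t

noncomputable def Qpc3 (M Λ a s t : ℝ) : ℝ := (3852896763105 : ℝ) * M^13 * Λ^6 * a^8 * s * t + (3472837263396 : ℝ) * M^13 * Λ^7 * a^10 * s * t + (35460597358170 : ℝ) * M^14 * Λ^3 * a + (-270630258068016 : ℝ) * M^14 * Λ^4 * a^3 + (465443876120688 : ℝ) * M^14 * Λ^5 * a^5 + (-205253050549266 : ℝ) * M^14 * Λ^6 * a^7 + (-4958207418222 : ℝ) * M^14 * Λ^7 * a^9 + (4707158941350 : ℝ) * M^14 * Λ^8 * a^11 + (-376572715308 : ℝ) * M^15 * Λ^3 * s * t + (33828782258502 : ℝ) * M^15 * Λ^4 * a^2 * s * t + (-187114798095264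 : ℝ) * M^15 * Λ^5 * a^4 * s * t + (288329175687492 : ℝ) * M^15 * Λ^6 * a^6 * s * t + (-146737834731684 : ℝ) * M^15 * Λ^7 * a^8 * s * t + (19770067553670 : ℝ) * M^15 * Λ^8 * a^10 * s * t + (-36715839742530 : ℝ) * M^16 * Λ^4 * a + (501218284074948 : ℝ) * M^16 * Λ^5 * a^3 + (-1390180940678700 : ℝ) * M^16 * Λ^6 * a^5 + (1233652215349008 : ℝ) * M^16 * Λ^7 * a^7 + (-343999175433858 : ℝ) * M^16 * Λ^8 * a^9 + (16945772188860 : ℝ) * M^16 * Λ^9 * a^11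

noncomputable def Qp (M Λ a s t : ℝ) : ℝ := Qpc0 M Λ a s t + Qpc1 M Λ a s t + Qpc2 M Λ a s t + Qpc3 M Λ a s t

noncomputable def C1pc0 (M Λ a s t : ℝ) : ℝ := (1244160 : ℝ) * M^2 * Λ * a^12 * t^4 + (44928 : ℝ) * M^2 * Λ * a^12 * t^6 + (14929920 : ℝ) * M^3 * Λ * a^11 * s * t^3 + (1119744 : ℝ) * M^3 * Λ * a^11 * s * t^5 + (-30233088 : ℝ) * M^4 * a^8 * t^4 + (-1819584 : ℝ) * M^4 * a^8 * t^6 + (69984 : ℝ) * M^4 * a^8 * s^2 * t^6 + (100776960 : ℝ) * M^4 * Λ * a^10 * t^2 + (-41710464 : ℝ) * M^4 * Λ * a^10 * t^4 + (-2239488 : ℝ) * M^4 * Λ * a^10 * t^6 + (100776960 : ℝ) * M^4 * Λ * a^10 * s^2 * t^2 + (15396480 : ℝ) * M^4 * Λ * a^10 * s^2 * t^4 + (23328 : ℝ) * M^4 * Λ * a^10 * s^2 * t^6 + (46189440 : ℝ) * M^4 * Λ^2 * a^12 * t^4 + (2146176 : ℝ) * M^4 * Λ^2 * a^12 * t^6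 + (-181398528 : ℝ) * M^5 * a^7 * s * t^3 + (-27713664 : ℝ) * M^5 * a^7 * s * t^5 + (2519424 : ℝ) * M^5 * a^7 * s^3 * t^5 + (362797056 : ℝ) * M^5 * Λ * a^9 * s * t + (-418224384 : ℝ) * M^5 * Λ * a^9 * s * t^3

noncomputable def C1pc1 (M Λ a s t : ℝ) : ℝ := (-48498912 : ℝ) * M^5 * Λ * a^9 * s * t^5 + (-69984 : ℝ) * M^5 * Λ * a^9 * s * t^7 + (362797056 : ℝ) * M^5 * Λ * a^9 * s^3 * t + (125971200 : ℝ) * M^5 * Λ * a^9 * s^3 * t^3 + (839808 : ℝ) * M^5 * Λ * a^9 * s^3 * t^5 + (352719360 : ℝ) * M^5 * Λ^2 * a^11 * s * t^3 + (41990400 : ℝ) * M^5 * Λ^2 * a^11 * s * t^5 + (-408146688 : ℝ) * M^6 * a^6 * t^2 + (374134464 : ℝ) * M^6 * a^6 * t^4 + (42515280 : ℝ) * M^6 * a^6 * t^6 + (-408146688 : ℝ) * M^6 * a^6 * s^2 * t^2 + (-204073344 : ℝ) * M^6 * a^6 * s^2 * t^4 + (-2361960 : ℝ) * M^6 * a^6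 * s^2 * t^6 + (34012224 : ℝ) * M^6 * a^6 * s^4 * t^4 + (544195584 : ℝ) * M^6 * Λ * a^8 + (-1972708992 : ℝ) * M^6 * Λ * a^8 * t^2 + (226748160 : ℝ) * M^6 * Λ * a^8 * t^4 + (11022480 : ℝ) * M^6 * Λ * a^8 * t^6 + (544195584 : ℝ) * M^6 * Λ * a^8 * s^2 + (-1972708992 : ℝ) * M^6 * Λ * a^8 * s^2 * t^2

noncomputable def C1pc2 (M Λ a s t : ℝ) : ℝ := (-555532992 : ℝ) * M^6 * Λ * a^8 * s^2 * t^4 + (472392 : ℝ) * M^6 * Λ * a^8 * s^2 * t^6 + (544195584 : ℝ) * M^6 * Λ * a^8 * s^4 + (612220032 : ℝ) * M^6 * Λ * a^8 * s^4 * t^2 + (11337408 : ℝ) * M^6 * Λ * a^8 * s^4 * t^4 + (113374080 : ℝ) * M^6 * Λ^2 * a^10 * t^2 + (-1195466688 : ℝ) * M^6 * Λ^2 * a^10 * t^4 + (-90069408 : ℝ) * M^6 * Λ^2 * a^10 * t^6 + (1020366720 : ℝ) * M^6 * Λ^2 * a^10 * s^2 * t^2 + (428302080 : ℝ) * M^6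 * Λ^2 * a^10 * s^2 * t^4 + (1259712 : ℝ) * M^6 * Λ^2 * a^10 * s^2 * t^6 + (352719360 : ℝ) * M^6 * Λ^3 * a^12 * t^4 + (22044960 : ℝ) * M^6 * Λ^3 * a^12 * t^6 + (1326476736 : ℝ) * M^7 * a^5 * s * t^3 + (535692528 : ℝ) * M^7 * a^5 * s * t^5 + (-714256704 : ℝ) * M^7 * a^5 * s^3 * t^3 + (-76527504 : ℝ) * M^7 * a^5 * s^3 * t^5 + (204073344 : ℝ) * M^7 * a^5 * s^5 * t^3 + (-3265173504 : ℝ) * M^7 * Λ * a^7 * s * t + (4413086064 : ℝ) * M^7 * Λ * a^7 * s * t^3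

noncomputable def C1pc3 (M Λ a s t : ℝ) : ℝ := (570413340 : ℝ) * M^7 * Λ * a^7 * s * t^5 + (2361960 : ℝ) * M^7 * Λ * a^7 * s * t^7 + (-3265173504 : ℝ) * M^7 * Λ * a^7 * s^3 * t + (-3545774352 : ℝ) * M^7 * Λ * a^7 * s^3 * t^3 + (42515280 : ℝ) * M^7 * Λ * a^7 * s^3 * t^5 + (1632586752 : ℝ) * M^7 * Λ * a^7 * s^5 * t + (68024448 : ℝ) * M^7 * Λ * a^7 * s^5 * t^3 + (-4489613568 : ℝ) * M^7 * Λ^2 * a^9 * s * t + (-5079158784 : ℝ) * M^7 * Λ^2 * a^9 * s * t^3 + (-1383163776 : ℝ) * M^7 * Λ^2 * a^9 * s * t^5 + (-3779136 : ℝ) * M^7 * Λ^2 * a^9 * s * t^7 + (-1224440064 : ℝ) * M^7 * Λ^2 * a^9 * s^3 * t + (2380855680 : ℝ) * M^7 * Λ^2 * a^9 * s^3 * t^3 + (34012224 : ℝ) * M^7 * Λ^2 * a^9 * s^3 * t^5 + (-529079040 : ℝ) * M^7 * Λ^3 * a^11 * s * t^3 + (226748160 : ℝ) * M^7 * Λ^3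 * a^11 * s * t^5 + (-918330048 : ℝ) * M^8 * a^4 * t^2 + (-994857552 : ℝ) * M^8 * a^4 * t^4 + (-440033148 : ℝ) * M^8 * a^4 * t^6 + (-918330048 : ℝ) * M^8 * a^4 * s^2 * t^2

noncomputable def C1pc4 (M Λ a s t : ℝ) : ℝ := (2678462640 : ℝ) * M^8 * a^4 * s^2 * t^4 + (25509168 : ℝ) * M^8 * a^4 * s^2 * t^6 + (-918330048 : ℝ) * M^8 * a^4 * s^4 * t^2 + (-803538792 : ℝ) * M^8 * a^4 * s^4 * t^4 + (459165024 : ℝ) * M^8 * a^4 * s^6 * t^2 + (1836660096 : ℝ) * M^8 * Λ * a^6 + (16989105888 : ℝ) * M^8 * Λ * a^6 * t^2 + (-2040733440 : ℝ) * M^8 * Λ * a^6 * t^4 + (-53144100 : ℝ) * M^8 * Λ * a^6 * t^6 + (1836660096 : ℝ) * M^8 * Λ * a^6 * s^2 + (13315785696 : ℝ) * M^8 * Λ * a^6 * s^2 * t^2 + (7104303288 : ℝ) * M^8 * Λ * a^6 * s^2 * t^4 + (-25509168 : ℝ) * M^8 * Λ * a^6 * s^2 * t^6 + (1836660096 : ℝ)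 * M^8 * Λ * a^6 * s^4 + (-11938290624 : ℝ) * M^8 * Λ * a^6 * s^4 * t^2 + (446410440 : ℝ) * M^8 * Λ * a^6 * s^4 * t^4 + (1836660096 : ℝ) * M^8 * Λ * a^6 * s^6 + (153055008 : ℝ) * M^8 * Λ * a^6 * s^6 * t^2 + (-18978820992 : ℝ) * M^8 * Λ^2 * a^8 + (25866296352 : ℝ) * M^8 * Λ^2 * a^8 * t^2

noncomputable def C1pc5 (M Λ a s t : ℝ) : ℝ := (14744299104 : ℝ) * M^8 * Λ^2 * a^8 * t^4 + (1903975956 : ℝ) * M^8 * Λ^2 * a^8 * t^6 + (-14081060736 : ℝ) * M^8 * Λ^2 * a^8 * s^2 + (8111915424 : ℝ) * M^8 * Λ^2 * a^8 * s^2 * t^2 + (-10152648864 : ℝ) * M^8 * Λ^2 * a^8 * s^2 * t^4 + (-63772920 : ℝ) * M^8 * Λ^2 * a^8 * s^2 * t^6 + (-9183300480 : ℝ) * M^8 * Λ^2 * a^8 * s^4 + (6734420352 : ℝ) * M^8 * Λ^2 * a^8 * s^4 * t^2 + (306110016 : ℝ) * M^8 * Λ^2 * a^8 * s^4 * t^4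 + (-26529534720 : ℝ) * M^8 * Λ^3 * a^10 * t^2 + (-2698303104 : ℝ) * M^8 * Λ^3 * a^10 * t^4 + (-399643632 : ℝ) * M^8 * Λ^3 * a^10 * t^6 + (-17346234240 : ℝ) * M^8 * Λ^3 * a^10 * s^2 * t^2 + (510183360 : ℝ) * M^8 * Λ^3 * a^10 * s^2 * t^4 + (25509168 : ℝ) * M^8 * Λ^3 * a^10 * s^2 * t^6 + (-3911405760 : ℝ) * M^8 * Λ^4 * a^12 * t^4 + (-510183360 : ℝ) * M^8 * Λ^4 * a^12 * t^6 + (4132485216 : ℝ) * M^9 * a^3 * s * t^3 + (-3788111448 : ℝ) * M^9 * a^3 * s * t^5 + (38263752 : ℝ) * M^9 * a^3 * s * t^7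

noncomputable def C1pc6 (M Λ a s t : ℝ) : ℝ := (4132485216 : ℝ) * M^9 * a^3 * s^3 * t^3 + (918330048 : ℝ) * M^9 * a^3 * s^3 * t^5 + (-2754990144 : ℝ) * M^9 * a^3 * s^5 * t^3 + (-16529940864 : ℝ) * M^9 * Λ * a^5 * s * t + (-29845726560 : ℝ) * M^9 * Λ * a^5 * s * t^3 + (-7576222896 : ℝ) * M^9 * Λ * a^5 * s * t^5 + (-38263752 : ℝ) * M^9 * Λ * a^5 * s * t^7 + (-16529940864 : ℝ) * M^9 * Λ * a^5 * s^3 * t + (34896541824 : ℝ) * M^9 * Λ * a^5 * s^3 * t^3 + (-1262703816 : ℝ) * M^9 * Λ * a^5 * s^3 * t^5 + (-16529940864 : ℝ) * M^9 * Λ * a^5 * s^5 * t + (1377495072 : ℝ) * M^9 * Λ * a^5 * s^5 * t^3 + (104689625472 : ℝ) * M^9 * Λ^2 * a^7 * s * t + (6428310336 : ℝ) * M^9 * Λ^2 * a^7 * s * t^3 + (21714679260 : ℝ) * M^9 * Λ^2 * a^7 * s * t^5 + (114791256 : ℝ) * M^9 * Λ^2 * a^7 * s * t^7 + (75303063936 :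 ℝ) * M^9 * Λ^2 * a^7 * s^3 * t + (-34666959312 : ℝ) * M^9 * Λ^2 * a^7 * s^3 * t^3 + (-344373768 : ℝ) * M^9 * Λ^2 * a^7 * s^3 * t^5 + (7346640384 : ℝ) * M^9 * Λ^2 * a^7 * s^5 * t

noncomputable def C1pc7 (M Λ a s t : ℝ) : ℝ := (918330048 : ℝ) * M^9 * Λ^2 * a^7 * s^5 * t^3 + (-34896541824 : ℝ) * M^9 * Λ^3 * a^9 * s * t + (70405303680 : ℝ) * M^9 * Λ^3 * a^9 * s * t^3 + (2181033864 : ℝ) * M^9 * Λ^3 * a^9 * s * t^5 + (-76527504 : ℝ) * M^9 * Λ^3 * a^9 * s * t^7 + (-45916502400 : ℝ) * M^9 * Λ^3 * a^9 * s^3 * t + (-4591650240 : ℝ) * M^9 * Λ^3 * a^9 * s^3 * t^3 + (459165024 : ℝ) * M^9 * Λ^3 * a^9 * s^3 * t^5 + (-39794302080 : ℝ) * M^9 * Λ^4 * a^11 * s * t^3 + (-9183300480 : ℝ) * M^9 * Λ^4 * a^11 * s * t^5 + (-6198727824 : ℝ) * M^10 * a^2 * t^4 + (2754990144 : ℝ)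 * M^10 * a^2 * t^6 + (-6198727824 : ℝ) * M^10 * a^2 * s^2 * t^4 + (86093442 : ℝ) * M^10 * a^2 * s^2 * t^6 + (6198727824 : ℝ) * M^10 * a^2 * s^4 * t^4 + (74384733888 : ℝ) * M^10 * Λ * a^4 * t^2 + (16874314632 : ℝ) * M^10 * Λ * a^4 * t^4 + (4046391774 : ℝ) * M^10 * Λ * a^4 * t^6 + (66119763456 : ℝ) * M^10 * Λ * a^4 * s^2 * t^2 + (-62331652008 : ℝ) * M^10 * Λ * a^4 * s^2 * t^4

noncomputable def C1pc8 (M Λ a s t : ℝ) : ℝ := (200884698 : ℝ) * M^10 * Λ * a^4 * s^2 * t^6 + (57854793024 : ℝ) * M^10 * Λ * a^4 * s^4 * t^2 + (-7576222896 : ℝ) * M^10 * Λ * a^4 * s^4 * t^4 + (-49589822592 : ℝ) * M^10 * Λ^2 * a^6 + (-404983551168 : ℝ) * M^10 * Λ^2 * a^6 * t^2 + (-65545807176 : ℝ) * M^10 * Λ^2 * a^6 * t^4 + (-25770636972 : ℝ) * M^10 * Λ^2 * a^6 * t^6 + (-33059881728 : ℝ) * M^10 * Λ^2 * a^6 * s^2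 + (-285141479904 : ℝ) * M^10 * Λ^2 * a^6 * s^2 * t^2 + (84486364416 : ℝ) * M^10 * Λ^2 * a^6 * s^2 * t^4 + (1119214746 : ℝ) * M^10 * Λ^2 * a^6 * s^2 * t^6 + (-16529940864 : ℝ) * M^10 * Λ^2 * a^6 * s^4 + (-41324852160 : ℝ) * M^10 * Λ^2 * a^6 * s^4 * t^2 + (-688747536 : ℝ) * M^10 * Λ^2 * a^6 * s^4 * t^4 + (264479053824 : ℝ) * M^10 * Λ^3 * a^8 + (203869270656 : ℝ) * M^10 * Λ^3 * a^8 * t^2 + (-37421949456 : ℝ) * M^10 * Λ^3 * a^8 * t^4 + (7547525082 : ℝ) * M^10 * Λ^3 * a^8 * t^6 + (137749507200 : ℝ) * M^10 * Λ^3 * a^8 * s^2 + (276876509472 : ℝ) * M^10 * Λ^3 * a^8 * s^2 * t^2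

noncomputable def C1pc9 (M Λ a s t : ℝ) : ℝ := (60609783168 : ℝ) * M^10 * Λ^3 * a^8 * s^2 * t^4 + (-1291401630 : ℝ) * M^10 * Λ^3 * a^8 * s^2 * t^6 + (55099802880 : ℝ) * M^10 * Λ^3 * a^8 * s^4 + (-20662426080 : ℝ) * M^10 * Λ^3 * a^8 * s^4 * t^2 + (2066242608 : ℝ) * M^10 * Λ^3 * a^8 * s^4 * t^4 + (121678731360 : ℝ) * M^10 * Λ^4 * a^10 * t^2 + (102164217840 : ℝ) * M^10 * Λ^4 * a^10 * t^4 + (27205527672 : ℝ) * M^10 * Λ^4 * a^10 * t^6 + (-34437376800 : ℝ) * M^10 * Λ^4 * a^10 * s^2 * t^2 + (-68874753600 : ℝ) * M^10 * Λ^4 * a^10 * s^2 * t^4 + (229582512 : ℝ) * M^10 * Λ^4 * a^10 * s^2 * t^6 + (-27549901440 : ℝ) * M^10 * Λ^5 * a^12 * t^4 + (-14348907000 : ℝ) * M^10 * Λ^5 * a^12 * t^6 + (3099363912 : ℝ) * M^11 * a * s * t^5 + (-516560652 : ℝ) * M^11 * a * s * t^7 + (-6198727824 : ℝ) * M^11 *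 a * s^3 * t^5 + (-136372012128 : ℝ) * M^11 * Λ * a^3 * s * t^3 + (77484097800 : ℝ) * M^11 * Λ * a^3 * s * t^5 + (947027862 : ℝ) * M^11 * Λ * a^3 * s * t^7 + (-99179645184 : ℝ) * M^11 * Λ * a^3 * s^3 * t^3

noncomputable def C1pc10 (M Λ a s t : ℝ) : ℝ := (10331213040 : ℝ) * M^11 * Λ * a^3 * s^3 * t^5 + (297538935552 : ℝ) * M^11 * Λ^2 * a^5 * s * t + (553753018944 : ℝ) * M^11 * Λ^2 * a^5 * s * t^3 + (-150835710384 : ℝ) * M^11 * Λ^2 * a^5 * s * t^5 + (-1549681956 : ℝ) * M^11 * Λ^2 * a^5 * s * t^7 + (148769467776 : ℝ) * M^11 * Λ^2 * a^5 * s^3 * t + (41324852160 : ℝ) * M^11 * Λ^2 * a^5 * s^3 * t^3 + (-1239745564800 : ℝ) * M^11 * Λ^3 * a^7 * s * t + (-803768374512 : ℝ) * M^11 * Λ^3 * a^7 * s * t^3 + (-121908313872 : ℝ) * M^11 * Λ^3 * a^7 * s * t^5 + (1807962282 : ℝ) * M^11 * Λ^3 * a^7 * s * t^7 + (-562017989376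 : ℝ) * M^11 * Λ^3 * a^7 * s^3 * t + (247949112960 : ℝ) * M^11 * Λ^3 * a^7 * s^3 * t^3 + (-6198727824 : ℝ) * M^11 * Λ^3 * a^7 * s^3 * t^5 + (909146747520 : ℝ) * M^11 * Λ^4 * a^9 * s * t + (144636982560 : ℝ) * M^11 * Λ^4 * a^9 * s * t^3 + (337830666408 : ℝ) * M^11 * Λ^4 * a^9 * s * t^5 + (-688747536 : ℝ) * M^11 * Λ^4 * a^9 * s * t^7 + (495898225920 : ℝ) * M^11 * Λ^4 * a^9 * s^3 * t + (-185961834720 : ℝ) * M^11 * Λ^4 * a^9 * s^3 * t^3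

noncomputable def C1pc11 (M Λ a s t : ℝ) : ℝ := (2066242608 : ℝ) * M^11 * Λ^4 * a^9 * s^3 * t^5 + (206624260800 : ℝ) * M^11 * Λ^5 * a^11 * s * t^3 + (-144636982560 : ℝ) * M^11 * Λ^5 * a^11 * s * t^5 + (2324522934 : ℝ) * M^12 * s^2 * t^6 + (139471376040 : ℝ) * M^12 * Λ * a^2 * t^4 + (-58113073350 : ℝ) * M^12 * Λ * a^2 * t^6 + (83682825624 : ℝ) * M^12 * Λ * a^2 * s^2 * t^4 + (-2324522934 : ℝ) * M^12 * Λ * a^2 * s^2 * t^6 + (-1115771008320 : ℝ) * M^12 * Λ^2 * a^4 * t^2 + (-359526213792 : ℝ) * M^12 * Λ^2 * a^4 * t^4 + (161166923424 : ℝ) * M^12 * Λ^2 * a^4 * t^6 + (-520693137216 : ℝ) * M^12 * Λ^2 * a^4 * s^2 * t^2 + (148769467776 : ℝ) * M^12 * Λ^2 * a^4 * s^2 * t^4 + (-7748409780 : ℝ) * M^12 * Λ^2 * a^4 * s^2 * t^6 + (446308403328 : ℝ) * M^12 * Λ^3 * a^6 + (4797815335776 : ℝ) * M^12 * Λ^3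 * a^6 * t^2 + (851291954496 : ℝ) * M^12 * Λ^3 * a^6 * t^4 + (24020070318 : ℝ) * M^12 * Λ^3 * a^6 * t^6 + (148769467776 : ℝ) * M^12 * Λ^3 * a^6 * s^2 + (2231542016640 : ℝ) * M^12 * Λ^3 * a^6 * s^2 * t^2

noncomputable def C1pc12 (M Λ a s t : ℝ) : ℝ := (-1053783730080 : ℝ) * M^12 * Λ^3 * a^6 * s^2 * t^4 + (13947137604 : ℝ) * M^12 * Λ^3 * a^6 * s^2 * t^6 + (-1735643790720 : ℝ) * M^12 * Λ^4 * a^8 + (-6025163444928 : ℝ) * M^12 * Λ^4 * a^8 * t^2 + (-638468965872 : ℝ) * M^12 * Λ^4 * a^8 * t^4 + (-441659357460 : ℝ) * M^12 * Λ^4 * a^8 * t^6 + (-495898225920 : ℝ) * M^12 * Λ^4 * a^8 * s^2 + (-3533274859680 : ℝ) * M^12 * Λ^4 * a^8 * s^2 * t^2 + (1301732843040 : ℝ) * M^12 * Λ^4 * a^8 * s^2 * t^4 + (-6973568802 : ℝ) * M^12 * Λ^4 * a^8 * s^2 * t^6 + (2169554738400 : ℝ) * M^12 * Λ^5 * a^10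 * t^2 + (-604375962840 : ℝ) * M^12 * Λ^5 * a^10 * t^4 + (438559993548 : ℝ) * M^12 * Λ^5 * a^10 * t^6 + (1859618347200 : ℝ) * M^12 * Λ^5 * a^10 * s^2 * t^2 + (-480401406360 : ℝ) * M^12 * Λ^5 * a^10 * s^2 * t^4 + (774840978 : ℝ) * M^12 * Λ^5 * a^10 * s^2 * t^6 + (542388684600 : ℝ) * M^12 * Λ^6 * a^12 * t^4 + (-127073920392 : ℝ) * M^12 * Λ^6 * a^12 * t^6 + (-27894275208 : ℝ) * M^13 * Λ * a * s * t^5 + (-2324522934 : ℝ) * M^13 * Λ * a * s * t^7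

noncomputable def C1pc13 (M Λ a s t : ℝ) : ℝ := (892616806656 : ℝ) * M^13 * Λ^2 * a^3 * s * t^3 + (-390519852912 : ℝ) * M^13 * Λ^2 * a^3 * s * t^5 + (9298091736 : ℝ) * M^13 * Λ^2 * a^3 * s * t^7 + (-1338925209984 : ℝ) * M^13 * Λ^3 * a^5 * s * t + (-4091160363840 : ℝ) * M^13 * Λ^3 * a^5 * s * t^3 + (2008387814976 : ℝ) * M^13 * Λ^3 * a^5 * s * t^5 + (-13947137604 : ℝ) * M^13 * Λ^3 * a^5 * s * t^7 + (5058161904384 : ℝ) * M^13 * Λ^4 * a^7 * s * t + (8926168066560 : ℝ) * M^13 * Λ^4 * a^7 * s * t^3 + (-3347313024960 : ℝ) * M^13 * Λ^4 * a^7 * s * t^5 + (9298091736 : ℝ) * M^13 * Λ^4 * a^7 * s * t^7 + (-4463084033280 : ℝ) * M^13 * Λ^5 * a^9 * s * t + (-9484053570720 : ℝ) * M^13 * Λ^5 * a^9 * s * t^3 + (2371013392680 : ℝ) * M^13 * Λ^5 * a^9 * s * t^5 + (-2324522934 : ℝ) * M^13 * Λ^5 * a^9 * s * t^7 + (3719236694400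 : ℝ) * M^13 * Λ^6 * a^11 * s * t^3 + (-613674054576 : ℝ) * M^13 * Λ^6 * a^11 * s * t^5 + (-753145430616 : ℝ) * M^14 * Λ^2 * a^2 * t^4 + (320784164892 : ℝ) * M^14 * Λ^2 * a^2 * t^6 + (4686238234944 : ℝ) * M^14 * Λ^3 * a^4 * t^2

noncomputable def C1pc14 (M Λ a s t : ℝ) : ℝ := (2845216071216 : ℝ) * M^14 * Λ^3 * a^4 * t^4 + (-1736418631698 : ℝ) * M^14 * Λ^3 * a^4 * t^6 + (-1338925209984 : ℝ) * M^14 * Λ^4 * a^6 + (-20083878149760 : ℝ) * M^14 * Λ^4 * a^6 * t^2 + (-7252511554080 : ℝ) * M^14 * Λ^4 * a^6 * t^4 + (3682044327456 : ℝ) * M^14 * Λ^4 * a^6 * t^6 + (4463084033280 : ℝ) * M^14 * Λ^5 * a^8 + (31799473737120 : ℝ) * M^14 * Λ^5 * a^8 * t^2 + (13389252099840 : ℝ) * M^14 * Λ^5 * a^8 * t^4 + (-3835462841100 : ℝ) * M^14 * Λ^5 * a^8 * t^6 + (-16736565124800 : ℝ) * M^14 * Λ^6 * a^10 * t^2 +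 (-12412952467560 : ℝ) * M^14 * Λ^6 * a^10 * t^4 + (1966546402164 : ℝ) * M^14 * Λ^6 * a^10 * t^6 + (4184141281200 : ℝ) * M^14 * Λ^7 * a^12 * t^4 + (-397493421714 : ℝ) * M^14 * Λ^7 * a^12 * t^6

noncomputable def C1p (M Λ a s t : ℝ) : ℝ := C1pc0 M Λ a s t + C1pc1 M Λ a s t + C1pc2 M Λ a s t + C1pc3 M Λ a s t + C1pc4 M Λ a s t + C1pc5 M Λ a s t + C1pc6 M Λ a s t + C1pc7 M Λ a s t + C1pc8 M Λ a s t + C1pc9 M Λ a s t + C1pc10 M Λ a s t + C1pc11 M Λ a s t + C1pc12 M Λ a s t + C1pc13 M Λ a s t + C1pc14 M Λ a s t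

noncomputable def C2pc0 (M Λ a s t : ℝ) : ℝ := (9216 : ℝ) * Λ * a^14 + (3072 : ℝ) * Λ * a^14 * t^2 + (1024 : ℝ) * Λ * a^14 * t^4 + (172800 : ℝ) * M * Λ * a^13 * s * t + (57600 : ℝ) * M * Λ * a^13 * s * t^3 + (768 : ℝ) * M * Λ * a^13 * s * t^5 + (-559872 : ℝ) * M^2 * a^10 + (-186624 : ℝ) * M^2 * a^10 * t^2 + (-62208 : ℝ) * M^2 * a^10 * t^4 + (3576960 : ℝ) * M^2 * Λ * a^12 + (1192320 : ℝ) * M^2 * Λ * a^12 * t^2 + (-17280 : ℝ) * M^2 * Λ * a^12 * t^4 + (590976 : ℝ) * M^2 * Λ^2 * a^14 + (196992 : ℝ) * M^2 * Λ^2 * a^14 * t^2 + (65664 : ℝ) * M^2 * Λ^2 * a^14 * t^4 + (-7138368 : ℝ) * M^3 * a^9 * s * t + (-2379456 : ℝ) * M^3 * a^9 * s * t^3 + (-46656 : ℝ) * M^3 * a^9 * s * t^5 + (8946288 : ℝ) * M^3 * Λ * a^11 * s * t + (-1994544 : ℝ) * M^3 * Λ * a^11 * s * t^3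

noncomputable def C2pc1 (M Λ a s t : ℝ) : ℝ := (-42768 : ℝ) * M^3 * Λ * a^11 * s * t^5 + (8802432 : ℝ) * M^3 * Λ^2 * a^13 * s * t + (2934144 : ℝ) * M^3 * Λ^2 * a^13 * s * t^3 + (44928 : ℝ) * M^3 * Λ^2 * a^13 * s * t^5 + (-93218688 : ℝ) * M^4 * a^8 + (-31072896 : ℝ) * M^4 * a^8 * t^2 + (-279936 : ℝ) * M^4 * a^8 * t^4 + (-50178528 : ℝ) * M^4 * Λ * a^10 + (-50318496 : ℝ) * M^4 * Λ * a^10 * t^2 + (-2869344 : ℝ) * M^4 * Λ * a^10 * t^4 + (89789472 : ℝ) * M^4 * Λ^2 * a^12 + (29929824 : ℝ) * M^4 * Λ^2 * a^12 * t^2 + (-1687392 : ℝ) * M^4 * Λ^2 * a^12 * t^4 + (13530240 : ℝ) * M^4 * Λ^3 * a^14 + (4510080 : ℝ) * M^4 * Λ^3 * a^14 * t^2 + (1503360 : ℝ) * M^4 * Λ^3 * a^14 * t^4 + (-95423184 : ℝ) * M^5 * a^7 * s * t + (28658448 : ℝ) * M^5 * a^7 * s * t^3 + (1154736 : ℝ)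 * M^5 * a^7 * s * t^5 + (-514513620 : ℝ) * M^5 * Λ * a^9 * s * t

noncomputable def C2pc2 (M Λ a s t : ℝ) : ℝ := (-32096412 : ℝ) * M^5 * Λ * a^9 * s * t^3 + (-411156 : ℝ) * M^5 * Λ * a^9 * s * t^5 + (-69179184 : ℝ) * M^5 * Λ^2 * a^11 * s * t + (-95843088 : ℝ) * M^5 * Λ^2 * a^11 * s * t^3 + (-2274480 : ℝ) * M^5 * Λ^2 * a^11 * s * t^5 + (136468800 : ℝ) * M^5 * Λ^3 * a^13 * s * t + (45489600 : ℝ) * M^5 * Λ^3 * a^13 * s * t^3 + (699840 : ℝ) * M^5 * Λ^3 * a^13 * s * t^5 + (994857552 : ℝ) * M^6 * a^6 + (467668080 : ℝ) * M^6 * a^6 * t^2 + (31177872 : ℝ) * M^6 * a^6 * t^4 + (1417176 : ℝ) * M^6 * Λ * a^8 + (658042056 : ℝ) * M^6 * Λ * a^8 * t^2 + (53065368 : ℝ) * M^6 * Λ * a^8 * t^4 + (-3344535360 : ℝ) * M^6 * Λ^2 * a^10 + (-850305600 : ℝ) * M^6 * Λ^2 * a^10 * t^2 + (-10077696 : ℝ)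 * M^6 * Λ^2 * a^10 * t^4 + (-697250592 : ℝ) * M^6 * Λ^3 * a^12 + (-232416864 : ℝ) * M^6 * Λ^3 * a^12 * t^2 + (-56477088 : ℝ) * M^6 * Λ^3 * a^12 * t^4

noncomputable def C2pc3 (M Λ a s t : ℝ) : ℝ := (103926240 : ℝ) * M^6 * Λ^4 * a^14 + (34642080 : ℝ) * M^6 * Λ^4 * a^14 * t^2 + (11547360 : ℝ) * M^6 * Λ^4 * a^14 * t^4 + (1307344860 : ℝ) * M^7 * a^5 * s * t + (-6377292 : ℝ) * M^7 * a^5 * s * t^3 + (-10628820 : ℝ) * M^7 * a^5 * s * t^5 + (8328743352 : ℝ) * M^7 * Λ * a^7 * s * t + (761023512 : ℝ) * M^7 * Λ * a^7 * s * t^3 + (17242308 : ℝ) * M^7 * Λ * a^7 * s * t^5 + (2784750840 : ℝ) * M^7 * Λ^2 * a^9 * s * t + (1366630056 : ℝ) * M^7 * Λ^2 * a^9 * s * t^3 + (53065368 : ℝ) * M^7 * Λ^2 * a^9 * s * t^5 + (-7644719736 : ℝ) * M^7 * Λ^3 * a^11 * s * t + (-1313722152 : ℝ) * M^7 * Λ^3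 * a^11 * s * t^3 + (-25981560 : ℝ) * M^7 * Λ^3 * a^11 * s * t^5 + (28343520 : ℝ) * M^7 * Λ^4 * a^13 * s * t + (9447840 : ℝ) * M^7 * Λ^4 * a^13 * s * t^3 + (-9447840 : ℝ) * M^7 * Λ^4 * a^13 * s * t^5 + (-7174453500 : ℝ) * M^8 * a^4 + (-2085374484 : ℝ) * M^8 * a^4 * t^2

noncomputable def C2pc4 (M Λ a s t : ℝ) : ℝ := (-363505644 : ℝ) * M^8 * a^4 * t^4 + (-1894055724 : ℝ) * M^8 * Λ * a^6 + (-7518827268 : ℝ) * M^8 * Λ * a^6 * t^2 + (-703627884 : ℝ) * M^8 * Λ * a^6 * t^4 + (90385359516 : ℝ) * M^8 * Λ^2 * a^8 + (15588227412 : ℝ) * M^8 * Λ^2 * a^8 * t^2 + (961553916 : ℝ) * M^8 * Λ^2 * a^8 * t^4 + (9591447168 : ℝ) * M^8 * Λ^3 * a^10 + (12380449536 : ℝ) * M^8 * Λ^3 * a^10 * t^2 + (1439850816 : ℝ) * M^8 * Λ^3 * a^10 * t^4 + (-28731826224 : ℝ) * M^8 * Λ^4 * a^12 + (-9577275408 :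 ℝ) * M^8 * Λ^4 * a^12 * t^2 + (-830465136 : ℝ) * M^8 * Λ^4 * a^12 * t^4 + (-510183360 : ℝ) * M^8 * Λ^5 * a^14 + (-170061120 : ℝ) * M^8 * Λ^5 * a^14 * t^2 + (-56687040 : ℝ) * M^8 * Λ^5 * a^14 * t^4 + (2152336050 : ℝ) * M^9 * a^3 * s * t + (-660049722 : ℝ) * M^9 * a^3 * s * t^3 + (124357194 : ℝ) * M^9 * a^3 * s * t^5 + (-65502760455 : ℝ) * M^9 * Λ * a^5 * s * t

noncomputable def C2pc5 (M Λ a s t : ℝ) : ℝ := (-7906247757 : ℝ) * M^9 * Λ * a^5 * s * t^3 + (-148272039 : ℝ) * M^9 * Λ * a^5 * s * t^5 + (-67372901334 : ℝ) * M^9 * Λ^2 * a^7 * s * t + (-11361145698 : ℝ) * M^9 * Λ^2 * a^7 * s * t^3 + (-883254942 : ℝ) * M^9 * Λ^2 * a^7 * s * t^5 + (190765529919 : ℝ) * M^9 * Λ^3 * a^9 * s * t + (24882599061 : ℝ) * M^9 * Λ^3 * a^9 * s * t^3 + (883786383 : ℝ) * M^9 * Λ^3 * a^9 * s * t^5 +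 (-33731623152 : ℝ) * M^9 * Λ^4 * a^11 * s * t + (433655856 : ℝ) * M^9 * Λ^4 * a^11 * s * t^3 + (637729200 : ℝ) * M^9 * Λ^4 * a^11 * s * t^5 + (-14922863280 : ℝ) * M^9 * Λ^5 * a^13 * s * t + (-4974287760 : ℝ) * M^9 * Λ^5 * a^13 * s * t^3 + (-467668080 : ℝ) * M^9 * Λ^5 * a^13 * s * t^5 + (2066242608 : ℝ) * M^10 * a^2 * t^4 + (239167581876 : ℝ) * M^10 * Λ * a^4 + (52172625852 : ℝ) * M^10 * Λ * a^4 * t^2 + (8781531084 : ℝ) * M^10 * Λ * a^4 * t^4 + (-842854797180 : ℝ) * M^10 * Λ^2 * a^6 + (-94989764340 : ℝ) * M^10 * Λ^2 * a^6 * t^2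

noncomputable def C2pc6 (M Λ a s t : ℝ) : ℝ := (-15936852708 : ℝ) * M^10 * Λ^2 * a^6 * t^4 + (-707917675752 : ℝ) * M^10 * Λ^3 * a^8 + (-226330093080 : ℝ) * M^10 * Λ^3 * a^8 * t^2 + (-18736483896 : ℝ) * M^10 * Λ^3 * a^8 * t^4 + (977064907320 : ℝ) * M^10 * Λ^4 * a^10 + (205540121160 : ℝ) * M^10 * Λ^4 * a^10 * t^2 + (26363725128 : ℝ) * M^10 * Λ^4 * a^10 * t^4 + (-20777217336 : ℝ) * M^10 * Λ^5 * a^12 + (-6925739112 : ℝ) * M^10 * Λ^5 * a^12 * t^2 + (-4859496504 : ℝ) * M^10 * Λ^5 * a^12 * t^4 + (-6772684104 : ℝ) * M^10 * Λ^6 * a^14 + (-2257561368 : ℝ) * M^10 * Λ^6 * a^14 * t^2 + (-752520456 : ℝ) * M^10 * Λ^6 * a^14 * t^4 + (-1033121304 : ℝ) * M^11 * a * s * t^5 + (-55401129927 : ℝ) * M^11 * Λ * a^3 * s * t + (39387749715 : ℝ) * M^11 * Λ * a^3 * s * t^3 + (-301327047 : ℝ) * M^11 * Λ * a^3 * s *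 t^5 + (1071475932411 : ℝ) * M^11 * Λ^2 * a^5 * s * t + (83037124809 : ℝ) * M^11 * Λ^2 * a^5 * s * t^3 + (10460353203 : ℝ) * M^11 * Λ^2 * a^5 * s * t^5

noncomputable def C2pc7 (M Λ a s t : ℝ) : ℝ := (-1549681956000 : ℝ) * M^11 * Λ^3 * a^7 * s * t + (-229352929488 : ℝ) * M^11 * Λ^3 * a^7 * s * t^3 + (-12569642532 : ℝ) * M^11 * Λ^3 * a^7 * s * t^5 + (-491722693983 : ℝ) * M^11 * Λ^4 * a^9 * s * t + (-903981141 : ℝ) * M^11 * Λ^4 * a^9 * s * t^3 + (-9943792551 : ℝ) * M^11 * Λ^4 * a^9 * s * t^5 + (834030219375 : ℝ) * M^11 * Λ^5 * a^11 * s * t + (89752413285 : ℝ) * M^11 * Λ^5 * a^11 * s * t^3 + (19586258055 : ℝ) * M^11 * Λ^5 * a^11 * s * t^5 + (-36159245640 : ℝ) * M^11 * Λ^6 * a^13 * s * t + (-12053081880 : ℝ) * M^11 * Λ^6 * a^13 * s * t^3 + (-6543101592 : ℝ) * M^11 * Λ^6 * a^13 * s * t^5 + (-65086642152 : ℝ)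 * M^12 * Λ * a^2 * t^4 + (-2775480383196 : ℝ) * M^12 * Λ^2 * a^4 + (-330082256628 : ℝ) * M^12 * Λ^2 * a^4 * t^2 + (60437596284 : ℝ) * M^12 * Λ^2 * a^4 * t^4 + (15069882181122 : ℝ) * M^12 * Λ^3 * a^6 + (2209071628278 : ℝ) * M^12 * Λ^3 * a^6 * t^2 + (255955803066 : ℝ) * M^12 * Λ^3 * a^6 * t^4 + (-12072797278218 : ℝ) * M^12 * Λ^4 * a^8

noncomputable def C2pc8 (M Λ a s t : ℝ) : ℝ := (-1404270132462 : ℝ) * M^12 * Λ^4 * a^8 * t^2 + (-367532903898 : ℝ) * M^12 * Λ^4 * a^8 * t^4 + (-2695155201810 : ℝ) * M^12 * Λ^5 * a^10 + (-1256533785990 : ℝ) * M^12 * Λ^5 * a^10 * t^2 + (89106712470 : ℝ) * M^12 * Λ^5 * a^10 * t^4 + (2368688869746 : ℝ) * M^12 * Λ^6 * a^12 + (789562956582 : ℝ) * M^12 * Λ^6 * a^12 * t^2 + (-258280326 : ℝ) * M^12 * Λ^6 * a^12 * t^4 + (102279009096 : ℝ) * M^12 * Λ^7 * a^14 + (34093003032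 : ℝ) * M^12 * Λ^7 * a^14 * t^2 + (11364334344 : ℝ) * M^12 * Λ^7 * a^14 * t^4 + (18596183472 : ℝ) * M^13 * Λ * a * s * t^5 + (338218086897 : ℝ) * M^13 * Λ^2 * a^3 * s * t + (-593915609637 : ℝ) * M^13 * Λ^2 * a^3 * s * t^3 + (-67798585575 : ℝ) * M^13 * Λ^2 * a^3 * s * t^5 + (-5950778711040 : ℝ) * M^13 * Λ^3 * a^5 * s * t + (1041386274432 : ℝ) * M^13 * Λ^3 * a^5 * s * t^3 + (46490458680 : ℝ) * M^13 * Λ^3 * a^5 * s * t^5 + (17959264188084 : ℝ) * M^13 * Λ^4 * a^7 * s * t + (599726916972 : ℝ) * M^13 * Λ^4 * a^7 * s * t^3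

noncomputable def C2pc9 (M Λ a s t : ℝ) : ℝ := (144120421908 : ℝ) * M^13 * Λ^4 * a^7 * s * t^5 + (-14537566429236 : ℝ) * M^13 * Λ^5 * a^9 * s * t + (-1250593338492 : ℝ) * M^13 * Λ^5 * a^9 * s * t^3 + (-286691161860 : ℝ) * M^13 * Λ^5 * a^9 * s * t^5 + (1284298921035 : ℝ) * M^13 * Λ^6 * a^11 * s * t + (-191773142055 : ℝ) * M^13 * Λ^6 * a^11 * s * t^3 + (187124096187 : ℝ) * M^13 * Λ^6 * a^11 * s * t^5 + (1157612421132 : ℝ) * M^13 * Λ^7 * a^13 * s * t + (385870807044 : ℝ) * M^13 * Λ^7 * a^13 * s * t^3 + (-41841412812 : ℝ) * M^13 * Λ^7 * a^13 * s * t^5 + (669462604992 : ℝ) * M^14 * Λ^2 * a^2 * t^4 + (11820199119390 : ℝ) * M^14 * Λ^3 * a^4 + (-969326063478 : ℝ) * M^14 * Λ^3 * a^4 * t^2 + (-2350092686274 : ℝ) * M^14 * Λ^3 * a^4 * t^4 + (-88424852409360 : ℝ) * M^14 * Λ^4 * a^6 + (-8386878745872 : ℝ) * M^14 * Λ^4 *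 a^6 * t^2 + (2175753466224 : ℝ) * M^14 * Λ^4 * a^6 * t^4 + (148453332656976 : ℝ) * M^14 * Λ^5 * a^8 + (20809129305168 : ℝ) * M^14 * Λ^5 * a^8 * t^2 + (557885504160 : ℝ) * M^14 * Λ^5 * a^8 * t^4

noncomputable def C2pc10 (M Λ a s t : ℝ) : ℝ := (-68417683516422 : ℝ) * M^14 * Λ^6 * a^10 + (-10718375248674 : ℝ) * M^14 * Λ^6 * a^10 * t^2 + (-1248268815558 : ℝ) * M^14 * Λ^6 * a^10 * t^4 + (-1652735806074 : ℝ) * M^14 * Λ^7 * a^12 + (-550911935358 : ℝ) * M^14 * Λ^7 * a^12 * t^2 + (48814981614 : ℝ) * M^14 * Λ^7 * a^12 * t^4 + (1569052980450 : ℝ) * M^14 * Λ^8 * a^14 + (523017660150 : ℝ) * M^14 * Λ^8 * a^14 * t^2 + (174339220050 : ℝ) * M^14 * Λ^8 * a^14 * t^4 + (-83682825624 : ℝ) * M^15 * Λ^2 * a * s * t^5 + (-125524238436 : ℝ) * M^15 * Λ^3 * a^3 * s * t + (2636009007156 : ℝ) * M^15 * Λ^3 * a^3 * s * t^3 + (543938366556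 : ℝ) * M^15 * Λ^3 * a^3 * s * t^5 + (7259485122882 : ℝ) * M^15 * Λ^4 * a^5 * s * t + (-9853652717226 : ℝ) * M^15 * Λ^4 * a^5 * s * t^3 + (-1443528742014 : ℝ) * M^15 * Λ^4 * a^5 * s * t^5 + (-47197113651936 : ℝ) * M^15 * Λ^5 * a^7 * s * t + (11046132982368 : ℝ) * M^15 * Λ^5 * a^7 * s * t^3 + (2008387814976 : ℝ) * M^15 * Λ^5 * a^7 * s * t^5 + (82720473129324 : ℝ) * M^15 * Λ^6 * a^9 * s * t

noncomputable def C2pc11 (M Λ a s t : ℝ) : ℝ := (-878669669052 : ℝ) * M^15 * Λ^6 * a^9 * s * t^3 + (-1548132274044 : ℝ) * M^15 * Λ^6 * a^9 * s * t^5 + (-48912611577228 : ℝ) * M^15 * Λ^7 * a^11 * s * t + (-5146493775876 : ℝ) * M^15 * Λ^7 * a^11 * s * t^3 + (627621192180 : ℝ) * M^15 * Λ^7 * a^11 * s * t^5 + (6590022517890 : ℝ) * M^15 * Λ^8 * a^13 * s * t + (2196674172630 : ℝ) * M^15 * Λ^8 * a^13 * s * t^3 + (-104603532030 : ℝ) *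 M^15 * Λ^8 * a^13 * s * t^5 + (-2259436291848 : ℝ) * M^16 * Λ^3 * a^2 * t^4 + (-12238613247510 : ℝ) * M^16 * Λ^4 * a^4 + (9979176955662 : ℝ) * M^16 * Λ^4 * a^4 * t^2 + (11862040532202 : ℝ) * M^16 * Λ^4 * a^4 * t^4 + (163055985728364 : ℝ) * M^16 * Λ^5 * a^6 + (-5899639206492 : ℝ) * M^16 * Λ^5 * a^6 * t^2 + (-23724081064404 : ℝ) * M^16 * Λ^5 * a^6 * t^4 + (-450004394793060 : ℝ) * M^16 * Λ^6 * a^8 + (-54603043719660 : ℝ) * M^16 * Λ^6 * a^8 * t^2 + (21966741726300 : ℝ) * M^16 * Λ^6 * a^8 * t^4 + (411217405116336 : ℝ) * M^16 * Λ^7 * a^10 + (86862772997712 : ℝ) * M^16 * Λ^7 * a^10 * t^2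

noncomputable def C2pc12 (M Λ a s t : ℝ) : ℝ := (-8284599736776 : ℝ) * M^16 * Λ^7 * a^10 * t^4 + (-114666391811286 : ℝ) * M^16 * Λ^8 * a^12 + (-38222130603762 : ℝ) * M^16 * Λ^8 * a^12 * t^2 + (-188286357654 : ℝ) * M^16 * Λ^8 * a^12 * t^4 + (5648590729620 : ℝ) * M^16 * Λ^9 * a^14 + (1882863576540 : ℝ) * M^16 * Λ^9 * a^14 * t^2 + (627621192180 : ℝ) * M^16 * Λ^9 * a^14 * t^4

noncomputable def C2p (M Λ a s t : ℝ) : ℝ := C2pc0 M Λ a s t + C2pc1 M Λ a s t + C2pc2 M Λ a s t + C2pc3 M Λ a s t + C2pc4 M Λ a s t + C2pc5 M Λ a s t + C2pc6 M Λ a s t + C2pc7 M Λ a s t + C2pc8 M Λ a s t + C2pc9 M Λ a s t + C2pc10 M Λ a s t + C2pc11 M Λ a s t + C2pc12 M Λ a s t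

set_option maxHeartbeats 3200000 in
lemma keyN (M Λ a s t : ℝ) :
    9 * M ^ 2 * s * (243 * M ^ 2 * t ^ 2 * Up M Λ a s t * (2 * s ^ 3 * Up M Λ a s t - 27 * M * t ^ 2 * a * Bp M Λ a s t) + 27 * a * t ^ 2 * M * (Bp M Λ a s t - 6 * M * s ^ 3 * a) * Dp M Λ a s t) - 2 * Pp M Λ a s t * Dp M Λ a s t * (Rp M Λ a s t) ^ 2 =
    a ^ 3 * Qp M Λ a s t + C1p M Λ a s t * (s ^ 2 - (1 - 9 * Λ * M ^ 2)) +
      C2p M Λ a s t * (t ^ 2 - 3) := by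
  simp only [Rp, Bp, Up, Dp, Pp, Qp, Qpc0, Qpc1, Qpc2, Qpc3, C1p, C1pc0, C1pc1, C1pc2, C1pc3, C1pc4, C1pc5, C1pc6, C1pc7, C1pc8, C1pc9, C1pc10, C1pc11, C1pc12, C1pc13, C1pc14, C2p, C2pc0, C2pc1, C2pc2, C2pc3, C2pc4, C2pc5, C2pc6, C2pc7, C2pc8, C2pc9, C2pc10, C2pc11, C2pc12]
  ring

lemma keyT (M Λ r β a s t : ℝ) (hM : M ≠ 0) (hs : s ≠ 0)
    (hΔ : Δr M Λ r a ≠ 0) (hr : r ≠ 0) :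
    Tdot M Λ r β a -
      (3 / s ^ 2 + (t * (2 - 45 * Λ * M ^ 2) / (3 * M * s ^ 3)) * a +
        ((810 * Λ ^ 2 * M ^ 4 - 135 * Λ * M ^ 2 + 8) / (9 * M ^ 2 * s ^ 4)) * a ^ 2) =
    (9 * M ^ 2 * s ^ 4 * ((r ^ 2 + a ^ 2) * ((r ^ 2 + a ^ 2) - a * β) + a * (β - a) * Δr M Λ r a) -
        Pp M Λ a s t * Δr M Λ r a * r ^ 2) / (9 * M ^ 2 * s ^ 4 * (Δr M Λ r a * r ^ 2)) := by
  simp only [Tdot, Pp]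
  field_simp
  ring


/-- as `a → 0`,
`T(r_poly(a), β_poly(a), a) - (3/S² + (√3·(2 - 45ΛM²)/(3MS³))·a
  + ((810Λ²M⁴ - 135ΛM² + 8)/(9M²S⁴))·a²) = O(a³)`. -/
theorem stmt_17 (M Λ : ℝ) (hM : 0 < M) (hΛ : 0 < Λ) (hsub : 9 * Λ * M ^ 2 < 1) :
    (fun a : ℝ =>
        Tdot M Λ (rpoly M Λ a) (βpoly M Λ a) a -
          (3 / (S M Λ) ^ 2 +
            (Real.sqrt 3 * (2 - 45 * Λ * M ^ 2) / (3 * M * (S M Λ) ^ 3)) * a +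
            ((810 * Λ ^ 2 * M ^ 4 - 135 * Λ * M ^ 2 + 8) / (9 * M ^ 2 * (S M Λ) ^ 4)) *
              a ^ 2))
      =O[nhds 0] fun a : ℝ => a ^ 3 := by
  have hA : 0 < 1 - 9 * Λ * M ^ 2 := by linarith
  have hs0 : 0 < S M Λ := Real.sqrt_pos.mpr hA
  have hs2 : (S M Λ) ^ 2 = 1 - 9 * Λ * M ^ 2 := Real.sq_sqrt hA.le
  have ht0 : (0:ℝ) < Real.sqrt 3 := Real.sqrt_pos.mpr (by norm_num)
  have ht2 : (Real.sqrt 3) ^ 2 = 3 := Real.sq_sqrt (by norm_num)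
  have hzs : (S M Λ) ^ 2 - (1 - 9 * Λ * M ^ 2) = 0 := by rw [hs2, sub_self]
  have hzt : (Real.sqrt 3) ^ 2 - 3 = 0 := by rw [ht2, sub_self]
  have hc1 : (3188646 : ℝ) * M ^ 6 * Real.sqrt 3 ^ 6 ≠ 0 :=
    mul_ne_zero (mul_ne_zero (by norm_num) (pow_ne_zero _ hM.ne')) (pow_ne_zero _ ht0.ne')
  have hc2 : (9 : ℝ) * M ^ 2 * S M Λ ^ 4 ≠ 0 :=
    mul_ne_zero (mul_ne_zero (by norm_num) (pow_ne_zero _ hM.ne')) (pow_ne_zero _ hs0.ne')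
  have hgc : Continuous (fun x : ℝ => Δr M Λ (rpoly M Λ x) x * rpoly M Λ x ^ 2) := by
    simp only [Δr, rpoly]
    fun_prop
  have hr0 : rpoly M Λ 0 = 3 * M := by simp [rpoly]
  have hg0 : Δr M Λ (rpoly M Λ 0) 0 * rpoly M Λ 0 ^ 2 ≠ 0 := by
    have key : Δr M Λ (3 * M) 0 * (3 * M) ^ 2 = 27 * (M ^ 4 * (1 - 9 * Λ * M ^ 2)) := by
      simp only [Δr]; ring
    rw [hr0, key]
    have := mul_pos (pow_pos hM 4) hA
    nlinarith [this]
  have hgev : ∀ᶠ x in nhds 0, Δr M Λ (rpoly M Λ x) x * rpoly M Λ x ^ 2 ≠ 0 :=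
    hgc.continuousAt.eventually_ne hg0
  have hQc : Continuous (fun x : ℝ => Qp M Λ x (S M Λ) (Real.sqrt 3)) := by
    simp only [Qp, Qpc0, Qpc1, Qpc2, Qpc3]
    fun_prop
  have hhc : ContinuousAt (fun x : ℝ => Qp M Λ x (S M Λ) (Real.sqrt 3) / (3188646 * M ^ 6 * Real.sqrt 3 ^ 6 * (9 * M ^ 2 * S M Λ ^ 4 * (Δr M Λ (rpoly M Λ x) x * rpoly M Λ x ^ 2)))) 0 := by
    apply ContinuousAt.div hQc.continuousAt
      ((continuous_const.mul (continuous_const.mul hgc)).continuousAt)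
    exact mul_ne_zero hc1 (mul_ne_zero hc2 hg0)
  have heq : (fun a : ℝ =>
        Tdot M Λ (rpoly M Λ a) (βpoly M Λ a) a -
          (3 / (S M Λ) ^ 2 +
            (Real.sqrt 3 * (2 - 45 * Λ * M ^ 2) / (3 * M * (S M Λ) ^ 3)) * a +
            ((810 * Λ ^ 2 * M ^ 4 - 135 * Λ * M ^ 2 + 8) / (9 * M ^ 2 * (S M Λ) ^ 4)) *
              a ^ 2)) =ᶠ[nhds 0] fun a : ℝ => a ^ 3 * (fun x : ℝ => Qp M Λ x (S M Λ) (Real.sqrt 3) / (3188646 * M ^ 6 * Real.sqrt 3 ^ 6 * (9 * M ^ 2 * S M Λ ^ 4 * (Δr M Λ (rpoly M Λ x) x * rpoly M Λ x ^ 2)))) a := by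
    filter_upwards [hgev] with a ha
    have hΔ : Δr M Λ (rpoly M Λ a) a ≠ 0 := left_ne_zero_of_mul ha
    have hrp : rpoly M Λ a ≠ 0 :=
      (pow_ne_zero_iff (by norm_num : (2:ℕ) ≠ 0)).mp (right_ne_zero_of_mul ha)
    have h1 := keyT M Λ (rpoly M Λ a) (βpoly M Λ a) a (S M Λ) (Real.sqrt 3)
      hM.ne' hs0.ne' hΔ hrp
    have hRr : Rp M Λ a (S M Λ) (Real.sqrt 3) = 9 * M * Real.sqrt 3 * rpoly M Λ a := by
      simp only [Rp, rpoly]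
      field_simp
      ring
    have hBr : Bp M Λ a (S M Λ) (Real.sqrt 3) = 6 * M * (S M Λ) ^ 3 * βpoly M Λ a := by
      simp only [Bp, βpoly]
      field_simp
      ring
    have h2 : 3188646 * M ^ 6 * Real.sqrt 3 ^ 6 * (9 * M ^ 2 * (S M Λ) ^ 4 * ((rpoly M Λ a ^ 2 + a ^ 2) * (rpoly M Λ a ^ 2 + a ^ 2 - a * βpoly M Λ a) + a * (βpoly M Λ a - a) * Δr M Λ (rpoly M Λ a) a) - Pp M Λ a (S M Λ) (Real.sqrt 3) * Δr M Λ (rpoly M Λ a) a * rpoly M Λ a ^ 2) = 9 * M ^ 2 * (S M Λ) * (243 * M ^ 2 * (Real.sqrt 3) ^ 2 * Up M Λ a (S M Λ) (Real.sqrt 3) * (2 * (S M Λ) ^ 3 * Up M Λ a (S M Λ) (Real.sqrt 3) - 27 * M * (Real.sqrt 3) ^ 2 * a * Bp M Λ a (S M Λ) (Real.sqrt 3)) + 27 * a * (Real.sqrt 3) ^ 2 * M * (Bp M Λ a (S M Λ) (Real.sqrt 3) - 6 * M * (S M Λ) ^ 3 * a) * Dp M Λ a (S M Λ) (Real.sqrt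 3)) - 2 * Pp M Λ a (S M Λ) (Real.sqrt 3) * Dp M Λ a (S M Λ) (Real.sqrt 3) * (Rp M Λ a (S M Λ) (Real.sqrt 3)) ^ 2 := by
      simp only [Up, Dp, Pp, hRr, hBr, Δr]
      ring
    have h3 := keyN M Λ a (S M Λ) (Real.sqrt 3)
    rw [hzs, hzt, mul_zero, mul_zero, add_zero, add_zero] at h3
    rw [h1]
    rw [show (9 * M ^ 2 * (S M Λ) ^ 4 * ((rpoly M Λ a ^ 2 + a ^ 2) * (rpoly M Λ a ^ 2 + a ^ 2 - a * βpoly M Λ a) + a * (βpoly M Λ a - a) * Δr M Λ (rpoly M Λ a) a) - Pp M Λ a (S M Λ) (Real.sqrt 3) * Δr M Λ (rpoly M Λ a) a * rpoly M Λ a ^ 2) = a ^ 3 * Qp M Λ a (S M Λ) (Real.sqrt 3) /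
        (3188646 * M ^ 6 * Real.sqrt 3 ^ 6) from by
      rw [eq_div_iff hc1]
      linear_combination h2 + h3]
    rw [div_div, mul_div_assoc]
  have hb : (fun x : ℝ => Qp M Λ x (S M Λ) (Real.sqrt 3) / (3188646 * M ^ 6 * Real.sqrt 3 ^ 6 * (9 * M ^ 2 * S M Λ ^ 4 * (Δr M Λ (rpoly M Λ x) x * rpoly M Λ x ^ 2)))) =O[nhds 0] (fun _ : ℝ => (1:ℝ)) := hhc.tendsto.isBigO_one ℝ
  have hO : (fun a : ℝ => a ^ 3 * (fun x : ℝ => Qp M Λ x (S M Λ) (Real.sqrt 3) / (3188646 * M ^ 6 * Real.sqrt 3 ^ 6 * (9 * M ^ 2 * S M Λ ^ 4 * (Δr M Λ (rpoly M Λ x) x * rpoly M Λ x ^ 2)))) a) =O[nhds 0] (fun a : ℝ => a ^ 3) := by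
    simpa using (isBigO_refl (fun a : ℝ => a ^ 3) (nhds 0)).mul hb
  exact heq.trans_isBigO hO
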